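/- arXiv:1405.5489 — 2 statements merged into one kernel-verified Lean document; each statement's English description precedes it below -/
import Mathlib

section
/- Suppose M > 0, N < 0, δ₁/K₀ > δ₂ and B < A·M/|N|. Then the transcendental equation G(M,p,y) = y + N·y³ has at least one solution ξ with 0 < ξ < √(B/(A·M)). -/
open Real MeasureTheory Filter Set

/-- `g p y = ∫₀^y exp(−r² + p·r·y) dr`. -/
noncomputable def g (p y : ℝ) : ℝ := ∫ r in (0:ℝ)..y, Real.exp (-r^2 + p*r*y)

/-- Complementary error function `erfc z = (2/√π)∫_z^∞ exp(−r²) dr`. -/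
noncomputable def erfc (z : ℝ) : ℝ := (2 / Real.sqrt π) * ∫ r in Set.Ioi z, Real.exp (-r^2)

/-- `G₁(p,y) = exp((p−1)y²)/(K₀ + g(p,y))`. -/
noncomputable def G₁ (K₀ p y : ℝ) : ℝ := Real.exp ((p-1)*y^2) / (K₀ + g p y)

/-- `G₂(y) = exp(−γ₀²y²)/erfc(γ₀y)`. -/
noncomputable def G₂ (γ₀ y : ℝ) : ℝ := Real.exp (-(γ₀^2*y^2)) / erfc (γ₀*y)

/-- `G(M,p,y) = δ₁(1 − (A·M/B)y²)G₁(p,y) − δ₂(1 + M·y²)G₂(y)`. -/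
noncomputable def Gfun (A B δ₁ δ₂ K₀ γ₀ M p y : ℝ) : ℝ :=
  δ₁ * (1 - A*M/B * y^2) * G₁ K₀ p y - δ₂ * (1 + M*y^2) * G₂ γ₀ y

lemma gauss_integrable : Integrable (fun r : ℝ => Real.exp (-r^2)) := by
  simpa using integrable_exp_neg_mul_sq (one_pos)

/-- Primitive of the Gaussian. -/
noncomputable def Phi (t : ℝ) : ℝ := ∫ u in (0:ℝ)..t, Real.exp (-u^2)

lemma Phi_continuous : Continuous Phi :=
  gauss_integrable.continuous_primitive 0

lemma erfc_eq (z : ℝ) :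
    erfc z = (2 / Real.sqrt π) *
      ((∫ r, Real.exp (-r^2)) - (∫ r in Set.Iic 0, Real.exp (-r^2)) - Phi z) := by
  unfold erfc
  congr 1
  have h1 : (∫ r in Set.Iic z, Real.exp (-r^2)) + ∫ r in Set.Ioi z, Real.exp (-r^2)
      = ∫ r, Real.exp (-r^2) :=
    intervalIntegral.integral_Iic_add_Ioi gauss_integrable.integrableOn
      gauss_integrable.integrableOn
  have h2 : (∫ r in Set.Iic z, Real.exp (-r^2)) - ∫ r in Set.Iic 0, Real.exp (-r^2) = Phi z :=
    intervalIntegral.integral_Iic_sub_Iic gauss_integrable.integrableOn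
      gauss_integrable.integrableOn
  linarith

lemma erfc_continuous : Continuous erfc := by
  have : erfc = fun z => (2 / Real.sqrt π) *
      ((∫ r, Real.exp (-r^2)) - (∫ r in Set.Iic 0, Real.exp (-r^2)) - Phi z) :=
    funext erfc_eq
  rw [this]
  exact continuous_const.mul (continuous_const.sub Phi_continuous)

lemma erfc_pos (z : ℝ) : 0 < erfc z := by
  unfold erfc
  apply mul_pos
  · positivity
  · rw [MeasureTheory.setIntegral_pos_iff_support_of_nonneg_ae]
    · have : Function.support (fun r : ℝ => Real.exp (-r^2)) = Set.univ := by
        ext r; simp [Real.exp_ne_zero]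
      rw [this, Set.univ_inter, Real.volume_Ioi]
      simp
    · filter_upwards with r using (Real.exp_pos _).le
    · exact gauss_integrable.integrableOn

lemma erfc_zero : erfc 0 = 1 := by
  unfold erfc
  have h : ∫ r in Set.Ioi (0:ℝ), Real.exp (-r^2)
      = Real.sqrt π / 2 := by
    have := integral_gaussian_Ioi 1
    simp only [neg_mul, one_mul, div_one] at this
    simpa using this
  rw [h]
  have hπ : Real.sqrt π ≠ 0 := by positivity
  field_simp

lemma g_eq (p y : ℝ) :
    g p y = Real.exp (p^2*y^2/4) * (Phi (y - p*y/2) - Phi (-(p*y/2))) := by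
  have hint : ∀ a b : ℝ, IntervalIntegrable (fun u : ℝ => Real.exp (-u^2)) volume a b :=
    fun a b => gauss_integrable.intervalIntegrable
  have h1 : g p y = ∫ r in (0:ℝ)..y, Real.exp (p^2*y^2/4) * Real.exp (-(r - p*y/2)^2) := by
    unfold g
    congr 1; funext r
    rw [← Real.exp_add]; ring_nf
  rw [h1, intervalIntegral.integral_const_mul]
  congr 1
  have h2 : (∫ r in (0:ℝ)..y, Real.exp (-(r - p*y/2)^2))
      = ∫ u in (0 - p*y/2)..(y - p*y/2), Real.exp (-u^2) :=
    intervalIntegral.integral_comp_sub_right (fun u => Real.exp (-u^2)) (p*y/2)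
  rw [h2]
  rw [show (0:ℝ) - p*y/2 = -(p*y/2) by ring]
  exact (intervalIntegral.integral_interval_sub_left (hint 0 (y - p*y/2))
    (hint 0 (-(p*y/2)))).symm

lemma g_continuous (p : ℝ) : Continuous (fun y => g p y) := by
  have : (fun y => g p y) = fun y =>
      Real.exp (p^2*y^2/4) * (Phi (y - p*y/2) - Phi (-(p*y/2))) :=
    funext (g_eq p)
  rw [this]
  exact (Real.continuous_exp.comp (by fun_prop)).mul
    ((Phi_continuous.comp (by fun_prop)).sub (Phi_continuous.comp (by fun_prop)))

lemma g_nonneg (p y : ℝ) (hy : 0 ≤ y) : 0 ≤ g p y :=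
  intervalIntegral.integral_nonneg hy (fun u _ => (Real.exp_pos _).le)

/-- If `M > 0`, `N < 0`, `δ₁/K₀ > δ₂` and `B < A·M/|N|`, then the
transcendental equation has at least one solution `ξ` with `0 < ξ < √(B/(A·M))`. -/
theorem stmt4 (A B δ₁ δ₂ K₀ γ₀ M N p : ℝ)
    (hA : 0 < A) (hB : 0 < B) (hδ₁ : 0 < δ₁) (hδ₂ : 0 < δ₂)
    (hK₀ : 0 < K₀) (hγ₀ : 0 < γ₀) (hM : 0 < M) (hN : N < 0)
    (h : δ₂ < δ₁ / K₀) (hBN : B < A * M / |N|) :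
    ∃ ξ : ℝ, 0 < ξ ∧ ξ < Real.sqrt (B / (A * M)) ∧
      Gfun A B δ₁ δ₂ K₀ γ₀ M p ξ = ξ + N * ξ^3 := by
  set y₀ := Real.sqrt (B / (A * M)) with hy₀def
  have hBAM : 0 < B / (A * M) := by positivity
  have hy₀ : 0 < y₀ := Real.sqrt_pos.mpr hBAM
  have hy₀sq : y₀^2 = B / (A*M) := Real.sq_sqrt hBAM.le
  set F : ℝ → ℝ := fun y => Gfun A B δ₁ δ₂ K₀ γ₀ M p y - (y + N * y^3) with hF
  -- key positivity facts
  have hden : ∀ y ∈ Set.Icc (0:ℝ) y₀, K₀ + g p y ≠ 0 := by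
    intro y hy
    have := g_nonneg p y hy.1
    positivity
  have hG₂cont : Continuous (fun y => G₂ γ₀ y) := by
    unfold G₂
    apply Continuous.div
    · fun_prop
    · exact erfc_continuous.comp (by fun_prop)
    · intro y; exact (erfc_pos _).ne'
  have hcont : ContinuousOn F (Set.Icc 0 y₀) := by
    apply ContinuousOn.sub
    · apply ContinuousOn.sub
      · apply ContinuousOn.mul
        · fun_prop
        · unfold G₁
          exact ContinuousOn.div (by fun_prop) ((continuous_const.add (g_continuous p)).continuousOn) hden
      · exact ((continuous_const.mul (by fun_prop : Continuous fun y:ℝ => 1 + M*y^2)).mul hG₂cont).continuousOn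
    · fun_prop
  -- value at 0
  have hg0 : g p 0 = 0 := by unfold g; simp
  have hF0 : F 0 = δ₁ / K₀ - δ₂ := by
    simp only [hF, Gfun, G₁, G₂, hg0]
    rw [show γ₀ * 0 = 0 by ring, erfc_zero]
    norm_num
    rw [div_eq_mul_inv]
  have hF0pos : 0 < F 0 := by rw [hF0]; linarith
  -- value at y₀
  have hG₂pos : ∀ y : ℝ, 0 < G₂ γ₀ y := by
    intro y
    unfold G₂
    exact div_pos (Real.exp_pos _) (erfc_pos _)
  have hcoef : 1 - A*M/B * y₀^2 = 0 := by
    rw [hy₀sq]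
    field_simp
    norm_num
  have hNy : 0 < 1 + N * y₀^2 := by
    rw [hy₀sq]
    rw [abs_of_neg hN] at hBN
    have hAM : 0 < A * M := by positivity
    rw [lt_div_iff₀ (by linarith)] at hBN
    have : N * (B / (A*M)) > -1 := by
      rw [gt_iff_lt, neg_lt, ← neg_mul]
      calc -N * (B/(A*M)) = (B * -N) / (A*M) := by ring
      _ < 1 := by rw [div_lt_one hAM]; linarith
    linarith
  have hFy₀neg : F y₀ < 0 := by
    have h1 : Gfun A B δ₁ δ₂ K₀ γ₀ M p y₀ = - (δ₂ * (1 + M*y₀^2) * G₂ γ₀ y₀) := by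
      unfold Gfun
      rw [hcoef]
      ring
    have h2 : 0 < δ₂ * (1 + M*y₀^2) * G₂ γ₀ y₀ := by
      have := hG₂pos y₀
      have : 0 < 1 + M * y₀^2 := by positivity
      positivity
    have h3 : 0 < y₀ + N * y₀^3 := by
      have : y₀ + N * y₀^3 = y₀ * (1 + N * y₀^2) := by ring
      rw [this]
      exact mul_pos hy₀ hNy
    simp only [hF]
    rw [h1]
    linarith
  -- IVT
  have hsub : Set.Ioo (F y₀) (F 0) ⊆ F '' Set.Ioo 0 y₀ :=
    intermediate_value_Ioo' hy₀.le hcont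
  obtain ⟨ξ, hξmem, hξeq⟩ := hsub ⟨hFy₀neg, hF0pos⟩
  refine ⟨ξ, hξmem.1, hξmem.2, ?_⟩
  have : F ξ = 0 := hξeq
  simp only [hF] at this
  linarith
end

section
/- Suppose M > 0, N > 0 and p ≤ 1, and let ω ∈ (0, √(B₀/(A·M))) satisfy the temperature-condition equation δ̃₁(1 − (A·M/B₀)y²)·exp((p−1)y²)/g(p,y) − δ₂(1 + M·y²)G₂(y) = y + N·y³. Then δ̃₁(1 − (A·M/B₀)ω²)/g(p,ω) > δ₂. (In physical variables: (B₀ − A·M·ω²)/g(p,ω) > 2α_U·A·k_F/(α_F·k_U·√π).) -/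
open Real MeasureTheory Filter Set

lemma shift (z : ℝ) (f : ℝ → ℝ) : ∫ r in Ioi z, f r = ∫ u in Ioi (0:ℝ), f (u + z) := by
  have h := (measurePreserving_add_right (volume : Measure ℝ) z).setIntegral_preimage_emb
    (measurableEmbedding_addRight z) f (Ioi z)
  have hpre : (fun x => x + z) ⁻¹' Ioi z = Ioi 0 := by ext x; simp
  rw [hpre] at h
  exact h.symm

lemma erfc_le' (z : ℝ) (hz : 0 ≤ z) :
    ∫ r in Ioi z, Real.exp (-r^2) ≤ Real.exp (-z^2) * (Real.sqrt π / 2) := by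
  rw [shift]
  have h2 : ∫ u in Ioi (0:ℝ), Real.exp (-z^2) * Real.exp (-u^2)
      = Real.exp (-z^2) * (Real.sqrt π / 2) := by
    rw [MeasureTheory.integral_const_mul]
    have h := integral_gaussian_Ioi 1
    simp only [neg_one_mul, Real.sqrt_one, div_one] at h
    rw [show (fun u : ℝ => Real.exp (-u^2)) = fun u : ℝ => Real.exp (-(1:ℝ) * u^2) by
      funext u; ring_nf, integral_gaussian_Ioi 1]
    norm_num
  rw [← h2]
  apply setIntegral_mono_on
  · have : Integrable (fun r : ℝ => Real.exp (-1 * r^2)) := integrable_exp_neg_mul_sq one_pos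
    have h4 := this.comp_add_right z
    have : (fun t : ℝ => Real.exp (-1 * (t + z)^2)) = fun x : ℝ => Real.exp (-(x + z)^2) := by
      funext t; ring_nf
    rw [this] at h4
    exact h4.integrableOn
  · have : Integrable (fun r : ℝ => Real.exp (-1 * r^2)) := integrable_exp_neg_mul_sq one_pos
    have h5 : (fun r : ℝ => Real.exp (-1 * r^2)) = fun r : ℝ => Real.exp (-r^2) := by
      funext t; ring_nf
    rw [h5] at this
    exact this.integrableOn.const_mul _
  · exact measurableSet_Ioi
  · intro u hu
    rw [← Real.exp_add]
    apply Real.exp_le_exp.2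
    nlinarith [le_of_lt (mem_Ioi.1 hu)]

lemma erfc_le_exp (z : ℝ) (hz : 0 ≤ z) : erfc z ≤ Real.exp (-z^2) := by
  unfold erfc
  have h := erfc_le' z hz
  have hπ : (0:ℝ) < Real.sqrt π := Real.sqrt_pos.2 Real.pi_pos
  calc 2 / Real.sqrt π * ∫ r in Ioi z, Real.exp (-r^2)
      ≤ 2 / Real.sqrt π * (Real.exp (-z^2) * (Real.sqrt π / 2)) := by
        apply mul_le_mul_of_nonneg_left h (by positivity)
    _ = Real.exp (-z^2) := by field_simp

lemma G₂_ge_one (γ₀ y : ℝ) (hγ₀ : 0 < γ₀) (hy : 0 ≤ y) : 1 ≤ G₂ γ₀ y := by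
  unfold G₂
  rw [le_div_iff₀ (erfc_pos _), one_mul]
  have := erfc_le_exp (γ₀*y) (by positivity)
  calc erfc (γ₀*y) ≤ Real.exp (-(γ₀*y)^2) := this
    _ = Real.exp (-(γ₀^2*y^2)) := by ring_nf

lemma g_pos (p y : ℝ) (hy : 0 < y) : 0 < g p y := by
  unfold g
  apply intervalIntegral.intervalIntegral_pos_of_pos_on
  · exact (Continuous.intervalIntegrable (by continuity) 0 y)
  · intro x _; positivity
  · exact hy

/-- For `M > 0`, `N > 0`, `p ≤ 1`, if `ω ∈ (0, √(B₀/(A·M)))` solves the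
temperature-condition equation, then `δ̃₁(1 − (A·M/B₀)ω²)/g(p,ω) > δ₂`. -/
theorem stmt13 (A B₀ δt δ₂ γ₀ M N p ω : ℝ)
    (hA : 0 < A) (hB₀ : 0 < B₀) (hδt : 0 < δt) (hδ₂ : 0 < δ₂)
    (hγ₀ : 0 < γ₀) (hM : 0 < M) (hN : 0 < N) (hp : p ≤ 1)
    (hωpos : 0 < ω) (hωlt : ω < Real.sqrt (B₀ / (A * M)))
    (hωeq : δt * (1 - A*M/B₀ * ω^2) * (Real.exp ((p-1)*ω^2) / g p ω)
        - δ₂ * (1 + M*ω^2) * G₂ γ₀ ω = ω + N * ω^3) :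
    δt * (1 - A*M/B₀ * ω^2) / g p ω > δ₂ := by
  have hg := g_pos p ω hωpos
  have hsq : Real.sqrt (B₀/(A*M)) ^ 2 = B₀/(A*M) := Real.sq_sqrt (by positivity)
  have hω2 : ω^2 < B₀/(A*M) := by nlinarith [Real.sqrt_nonneg (B₀/(A*M))]
  have hcpos : 0 < 1 - A*M/B₀ * ω^2 := by
    have : A*M/B₀ * ω^2 < A*M/B₀ * (B₀/(A*M)) := by
      apply mul_lt_mul_of_pos_left hω2 (by positivity)
    have heq : A*M/B₀ * (B₀/(A*M)) = 1 := by field_simp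
    linarith [heq ▸ this]
  have hG2 := G₂_ge_one γ₀ ω hγ₀ hωpos.le
  have hexp1 : Real.exp ((p-1)*ω^2) ≤ 1 := Real.exp_le_one_iff.2 (by nlinarith)
  have hexp0 : 0 < Real.exp ((p-1)*ω^2) := Real.exp_pos _
  have hX : 0 < δt * (1 - A*M/B₀ * ω^2) / g p ω := by positivity
  have hkey : δt * (1 - A*M/B₀ * ω^2) * (Real.exp ((p-1)*ω^2) / g p ω)
      = (δt * (1 - A*M/B₀ * ω^2) / g p ω) * Real.exp ((p-1)*ω^2) := by ring
  have hRHS : δ₂ < ω + N * ω^3 + δ₂ * (1 + M*ω^2) * G₂ γ₀ ω := by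
    nlinarith [mul_pos hN (pow_pos hωpos 3), mul_pos hM (pow_pos hωpos 2),
      mul_pos hδ₂ (mul_pos hM (pow_pos hωpos 2))]
  have hE : δ₂ < δt * (1 - A*M/B₀ * ω^2) * (Real.exp ((p-1)*ω^2) / g p ω) := by linarith
  rw [hkey] at hE
  nlinarith
end
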